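/- arXiv:2604.26849 — 3 statements merged into one kernel-verified Lean document; each statement's English description precedes it below -/
import Mathlib

section
/- Let d, e, f ∈ ℝ with f ≠ 0 and let R : H_d → H_d be the linear map defined by R(e0) = 0, R(e1) = 0, R(e2) = d e1 - e e2 + f e3, R(e3) = (de/f) e1 - (e²/f) e2 + e e3. Then R is a Rota-Baxter operator of weight 0 on H_d. -/
noncomputable section

/-- The dual quaternion algebra `H_d`, realized as the trivial square-zero
extension of `ℝ` by `ℝ³`; its multiplication is
`(x0,v)·(y0,w) = (x0 y0, x0 • w + y0 • v)`, matching the dual quaternion product. -/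
abbrev Hd : Type := TrivSqZeroExt ℝ (Fin 3 → ℝ)

/-- Basis element `e0` (the identity). -/
def e0 : Hd := 1
/-- Basis element `e1`. -/
def e1 : Hd := TrivSqZeroExt.inr (Pi.single 0 1)
/-- Basis element `e2`. -/
def e2 : Hd := TrivSqZeroExt.inr (Pi.single 1 1)
/-- Basis element `e3`. -/
def e3 : Hd := TrivSqZeroExt.inr (Pi.single 2 1)

/-- The element `x0 e0 + x1 e1 + x2 e2 + x3 e3` of `H_d`. -/
def mk (x0 x1 x2 x3 : ℝ) : Hd := x0 • e0 + x1 • e1 + x2 • e2 + x3 • e3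

/-- `R` is a Rota-Baxter operator of weight `lam` on `H_d`. -/
def RotaBaxter (lam : ℝ) (R : Hd →ₗ[ℝ] Hd) : Prop :=
  ∀ x y : Hd, R x * R y = R (R x * y) + R (x * R y) + lam • R (x * y)

lemma hd_decomp (x : Hd) :
    x = x.fst • e0 + x.snd 0 • e1 + x.snd 1 • e2 + x.snd 2 • e3 := by
  apply TrivSqZeroExt.ext
  · simp [e0, e1, e2, e3]
  · funext i
    fin_cases i <;>
      simp [e0, e1, e2, e3, Pi.single_apply]

/-- For `f ≠ 0`, the linear map with `R(e0) = R(e1) = 0`,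
`R(e2) = d e1 - ε e2 + f e3`, `R(e3) = (dε/f) e1 - (ε²/f) e2 + ε e3`
is a Rota-Baxter operator of weight `0` on `H_d`. -/
theorem stmt7 (d ε f : ℝ) (hf : f ≠ 0) (R : Hd →ₗ[ℝ] Hd)
    (h0 : R e0 = 0) (h1 : R e1 = 0)
    (h2 : R e2 = d • e1 - ε • e2 + f • e3)
    (h3 : R e3 = (d * ε / f) • e1 - (ε ^ 2 / f) • e2 + ε • e3) :
    RotaBaxter 0 R := by
  -- R ∘ R vanishes on basis elements
  have hRR2 : R (R e2) = 0 := by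
    rw [h2, map_add, map_sub, map_smul, map_smul, map_smul, h1, h2, h3]
    rw [smul_add, smul_sub, smul_add, smul_sub, smul_smul, smul_smul, smul_smul,
      smul_smul, smul_smul, smul_smul]
    rw [show f * (d * ε / f) = ε * d by field_simp,
      show f * (ε ^ 2 / f) = ε * ε by field_simp]
    simp only [smul_zero, zero_add]
    module
  have hRR3 : R (R e3) = 0 := by
    rw [h3, map_add, map_sub, map_smul, map_smul, map_smul, h1, h2, h3]
    rw [smul_add, smul_sub, smul_add, smul_sub, smul_smul, smul_smul, smul_smul,
      smul_smul, smul_smul, smul_smul]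
    rw [show ε ^ 2 / f * d = ε * (d * ε / f) by field_simp,
      show ε ^ 2 / f * ε = ε * (ε ^ 2 / f) by field_simp,
      show ε ^ 2 / f * f = ε * ε by field_simp]
    simp only [smul_zero, zero_add]
    module
  have hRR : ∀ x : Hd, R (R x) = 0 := by
    intro x
    rw [hd_decomp x]
    simp only [map_add, map_smul, h0, h1, smul_zero, zero_add, add_zero, map_zero,
      hRR2, hRR3]
  -- R x always lies in the square-zero ideal
  have hfst : ∀ x : Hd, (R x).fst = 0 := by
    intro x
    rw [hd_decomp x, map_add, map_add, map_add, map_smul, map_smul, map_smul,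
      map_smul, h0, h1, h2, h3]
    simp [e1, e2, e3]
  have hinr : ∀ x : Hd, R x = TrivSqZeroExt.inr (R x).snd := by
    intro x
    conv_lhs => rw [← TrivSqZeroExt.inl_fst_add_inr_snd_eq (R x)]
    rw [hfst, TrivSqZeroExt.inl_zero, zero_add]
  -- inr m * y = y.fst • inr m
  have hmul : ∀ (m : Fin 3 → ℝ) (y : Hd),
      (TrivSqZeroExt.inr m : Hd) * y = y.fst • TrivSqZeroExt.inr m := by
    intro m y
    apply TrivSqZeroExt.ext
    · simp
    · simp [TrivSqZeroExt.snd_mul, op_smul_eq_smul]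
  have hmul' : ∀ (m : Fin 3 → ℝ) (y : Hd),
      y * (TrivSqZeroExt.inr m : Hd) = y.fst • TrivSqZeroExt.inr m := by
    intro m y
    apply TrivSqZeroExt.ext
    · simp
    · simp [TrivSqZeroExt.snd_mul, op_smul_eq_smul]
  intro x y
  rw [hinr x, hinr y, TrivSqZeroExt.inr_mul_inr]
  rw [← hinr x, ← hinr y]
  rw [show R x * y = y.fst • R x by rw [hinr x, hmul, ← hinr x],
    show x * R y = x.fst • R y by rw [hinr y, hmul', ← hinr y]]
  rw [map_smul, map_smul, hRR x, hRR y]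
  simp
end
end

section
/- If R is a Rota-Baxter operator of weight 0 on H_d, then R(e0)² = 2 R(R(e0) e0), and consequently the real part of R(e0) is zero (writing R(e0) = a_11 e0 + ..., one gets a_11² = 0 from comparing real parts after using the structure of H_d together with the remaining Rota-Baxter relations); in particular R(e0) is a nilpotent element of H_d. -/
/-!
A weight-zero Rota–Baxter operator acts on the powers of `u = R 1` as integration:
`(n + 1) • R (u ^ n) = u ^ (n + 1)`. In a trivial square-zero extension every element satisfies
`u ^ 2 = 2 a u - a ^ 2` with `a` its scalar part. Applying `R` to this relation, using the cases
`n = 1, 2` of the integration formula and comparing scalar parts gives `a ^ 3 = 0`; since the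
kernel of the scalar part is square-zero, `R 1` is nilpotent.
-/

noncomputable section

section WeightZero

variable {A F : Type*} [Ring A] [FunLike F A A] [AddMonoidHomClass F A A] {R : F}

theorem succ_nsmul_apply_pow_apply_one (hR : ∀ x y, R x * R y = R (R x * y) + R (x * R y))
    (n : ℕ) : (n + 1) • R (R 1 ^ n) = R 1 ^ (n + 1) := by
  induction n with
  | zero => simp
  | succ n ih =>
    have h := hR 1 (R 1 ^ n)
    rw [one_mul, ← pow_succ'] at h
    calc (n + 1 + 1) • R (R 1 ^ (n + 1))
        = (n + 1) • (R (R 1 ^ (n + 1)) + R (R (R 1 ^ n))) := by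
          rw [succ_nsmul, smul_add, ← map_nsmul R _ (R (R 1 ^ n)), ih]
      _ = R 1 * ((n + 1) • R (R 1 ^ n)) := by rw [← h, mul_smul_comm]
      _ = R 1 ^ (n + 1 + 1) := by rw [ih, ← pow_succ']

end WeightZero

namespace TrivSqZeroExt

variable {K M : Type*} [CommRing K] [AddCommGroup M] [Module K M] [Module Kᵐᵒᵖ M]
  [IsCentralScalar K M]

theorem sq_eq_smul_sub (x : TrivSqZeroExt K M) : x ^ 2 = (2 * x.fst) • x - x.fst ^ 2 • 1 := by
  ext <;> simp [pow_two, two_mul, add_smul]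

theorem isNilpotent_fst_apply_one (R : TrivSqZeroExt K M →ₗ[K] TrivSqZeroExt K M)
    (hR : ∀ x y, R x * R y = R (R x * y) + R (x * R y)) : IsNilpotent (R 1).fst := by
  have h2 := congrArg fst (succ_nsmul_apply_pow_apply_one hR 1)
  have h3 := congrArg fst (succ_nsmul_apply_pow_apply_one hR 2)
  rw [sq_eq_smul_sub, map_sub, map_smul, map_smul] at h3
  simp only [← Nat.cast_smul_eq_nsmul K, fst_smul, fst_sub, fst_pow, smul_eq_mul, pow_one] at h2 h3
  push_cast at h2 h3
  exact ⟨3, by linear_combination 3 * (R 1).fst * h2 - h3⟩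

end TrivSqZeroExt

/-- For a Rota-Baxter operator `R` of weight `0` on `H_d`,
`R(e0)² = 2 R(R(e0) e0)`, the real part of `R(e0)` vanishes, and `R(e0)` is
nilpotent. -/
theorem stmt11 (R : Hd →ₗ[ℝ] Hd) (hR : RotaBaxter 0 R) :
    R e0 * R e0 = (2 : ℝ) • R (R e0 * e0) ∧
    TrivSqZeroExt.fst (R e0) = 0 ∧
    IsNilpotent (R e0) := by
  have hR₀ : ∀ x y, R x * R y = R (R x * y) + R (x * R y) := fun x y => by
    simpa using hR x y
  have hfst := TrivSqZeroExt.isNilpotent_fst_apply_one R hR₀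
  refine ⟨?_, hfst.eq_zero, TrivSqZeroExt.isNilpotent_iff_isNilpotent_fst.mpr hfst⟩
  rw [e0, mul_one, two_smul]
  simpa using hR₀ 1 1
end
end

section
/- Every Rota-Baxter operator R of weight 0 on H_d satisfies R∘R∘R = 0 (R is nilpotent of index at most 3 as a linear map). In particular, R(e0) lies in span(e0) under the image of pure elements, and R³ = 0 for both families in the classification. -/
noncomputable section

open TrivSqZeroExt in
/-- Every Rota-Baxter operator of weight `0` on `H_d` satisfies `R³ = 0`. -/
theorem stmt15 (R : Hd →ₗ[ℝ] Hd) (hR : RotaBaxter 0 R) :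
    ∀ x : Hd, R (R (R x)) = 0 := by
  have hR' : ∀ x y : Hd, R x * R y = R (R x * y) + R (x * R y) := by
    intro x y
    have := hR x y
    simpa using this
  -- multiplying by inr v only sees the fst component
  have hmulr : ∀ (z : Hd) (v : Fin 3 → ℝ), z * inr v = z.fst • (inr v : Hd) := by
    intro z v
    apply TrivSqZeroExt.ext
    · simp [fst_mul, smul_eq_mul]
    · simp [snd_mul, TrivSqZeroExt.snd_smul]
  have hmull : ∀ (z : Hd) (v : Fin 3 → ℝ), (inr v : Hd) * z = z.fst • (inr v : Hd) := by
    intro z v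
    apply TrivSqZeroExt.ext
    · simp [fst_mul, smul_eq_mul]
    · simp [snd_mul, TrivSqZeroExt.snd_smul, op_smul_eq_smul]
  -- Step A: fst (R (inr v)) = 0
  have hA : ∀ v : Fin 3 → ℝ, (R (inr v)).fst = 0 := by
    intro v
    have h := congrArg TrivSqZeroExt.fst (hR' (inr v) (inr v))
    rw [hmulr (R (inr v)) v, hmull (R (inr v)) v] at h
    simp only [map_smul, map_add, TrivSqZeroExt.fst_mul, TrivSqZeroExt.fst_smul,
      TrivSqZeroExt.fst_add, smul_eq_mul] at h
    nlinarith [h]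
  -- Step B: fst (R 1) = 0
  have hB : (R 1).fst = 0 := by
    have h := congrArg TrivSqZeroExt.fst (hR' 1 1)
    rw [mul_one, one_mul] at h
    -- R (R 1): decompose R 1 = inl (R 1).fst + inr (R 1).snd
    have hdec : (R 1 : Hd) = (R 1).fst • (1 : Hd) + inr (R 1).snd := by
      rw [← inl_fst_add_inr_snd_eq (R 1)]
      congr 1
      · apply TrivSqZeroExt.ext <;>
          simp [TrivSqZeroExt.fst_smul, TrivSqZeroExt.snd_smul, TrivSqZeroExt.fst_one,
            TrivSqZeroExt.snd_one, smul_eq_mul]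
      · simp
    have h2 : (R (R 1)).fst = (R 1).fst * (R 1).fst := by
      conv_lhs => rw [hdec]
      rw [map_add, map_smul]
      simp [TrivSqZeroExt.fst_add, TrivSqZeroExt.fst_smul, hA, smul_eq_mul]
    rw [TrivSqZeroExt.fst_mul] at h
    simp only [TrivSqZeroExt.fst_add, h2] at h
    nlinarith [h]
  -- Step C: fst (R x) = 0 for all x
  have hC : ∀ x : Hd, (R x).fst = 0 := by
    intro x
    have hdec : (x : Hd) = x.fst • (1 : Hd) + inr x.snd := by
      apply TrivSqZeroExt.ext <;> simp
    rw [hdec, map_add, map_smul]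
    simp [TrivSqZeroExt.fst_add, TrivSqZeroExt.fst_smul, hA, hB, smul_eq_mul]
  -- Step D: R x * R y = 0 for all x y
  have hD : ∀ x y : Hd, R x * R y = 0 := by
    intro x y
    apply TrivSqZeroExt.ext
    · simp [TrivSqZeroExt.fst_mul, hC]
    · simp [TrivSqZeroExt.snd_mul, hC]
  -- Step E
  intro x
  have h := hR' (R x) 1
  rw [mul_one, hD, hD] at h
  simpa using h.symm
end
end
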